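/- arXiv:2007.15919 — 5 statements merged into one kernel-verified Lean document; each statement's English description precedes it below -/
import Mathlib

section
/- Adding a new instruction bb to a hardware secure processor C, where executing bb only writes to four fresh registers IC, T, B, E (disjoint from the resources of C) and does not change the set of retired instructions of any program, yields a processor C' that is again hardware secure. -/
/-- An execution is *t-secure* if every instruction of its instruction stream
that has a microarchitectural effect is either retired or raises an
exception. -/
def TSecure {Instr Resource : Type} (stream retired : List Instr)
    (effect : Instr → Resource → Prop) (raises : Instr → Prop) : Prop :=
  ∀ i ∈ stream, (∃ r, effect i r) → i ∈ retired ∨ raises i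

/-- A processor is *hardware secure* if every program of its program space is
t-secure. -/
def HardwareSecure {Prog Instr Resource : Type}
    (stream retired : Prog → List Instr)
    (effect : Instr → Resource → Prop) (raises : Instr → Prop) : Prop :=
  ∀ p : Prog, TSecure (stream p) (retired p) effect raises

/-- Adding a new `bb` instruction to a hardware secure processor `C` yields a
hardware secure processor `C'`.  The new processor has instruction type
`Instr ⊕ Unit` (`Sum.inr ()` being `bb`) and resource type
`Resource ⊕ Fin 4`, the four fresh registers `IC`, `T`, `B`, `E` being
disjoint from the resources of `C`.  Executing `bb` only writes to the fresh
registers, the effects of the old instructions are unchanged (in particular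
they do not touch the fresh registers), `bb` is always retired or raises an
exception, and the set of retired old instructions of any program is
unchanged. -/
theorem bb_preserves_hardware_security
    {Prog Instr Resource : Type}
    (streamC retiredC : Prog → List Instr)
    (effectC : Instr → Resource → Prop)
    (raisesC : Instr → Prop)
    -- C is hardware secure
    (hC : HardwareSecure streamC retiredC effectC raisesC)
    -- executions of the extended processor C'
    (stream' retired' : Prog → List (Instr ⊕ Unit))
    (effect' : (Instr ⊕ Unit) → (Resource ⊕ Fin 4) → Prop)
    (raises' : (Instr ⊕ Unit) → Prop)
    -- bb only writes to the four fresh registers IC, T, B, E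
    (hbbFresh : ∀ r : Resource, ¬ effect' (Sum.inr ()) (Sum.inl r))
    -- the effects of old instructions are unchanged: they affect exactly the
    -- old resources they affected on C, and none of the fresh registers
    (hold : ∀ (i : Instr) (r' : Resource ⊕ Fin 4),
      effect' (Sum.inl i) r' ↔ ∃ r : Resource, r' = Sum.inl r ∧ effectC i r)
    -- old instructions raise exceptions exactly as on C
    (hraises : ∀ i : Instr, raises' (Sum.inl i) ↔ raisesC i)
    -- the instruction streams agree on old instructions
    (hstream : ∀ (p : Prog) (i : Instr),
      Sum.inl i ∈ stream' p ↔ i ∈ streamC p)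
    -- adding bb does not change the set of retired instructions of any program
    (hret : ∀ (p : Prog) (i : Instr),
      Sum.inl i ∈ retired' p ↔ i ∈ retiredC p)
    -- bb itself is always retired or raises an exception
    (hbb : ∀ p : Prog, Sum.inr () ∈ stream' p →
      Sum.inr () ∈ retired' p ∨ raises' (Sum.inr ())) :
    HardwareSecure stream' retired' effect' raises' := by
  intro p i hi hieff
  cases i with
  | inl i =>
    rcases hieff with ⟨r', hr'⟩
    rcases (hold i r').1 hr' with ⟨r, _, hir⟩
    rcases hC p i ((hstream p i).1 hi) ⟨r, hir⟩ with h | h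
    · exact Or.inl ((hret p i).2 h)
    · exact Or.inr ((hraises i).2 h)
  | inr u => cases u; exact hbb p hi
end

section
/- In the BasicBlocker small-step semantics, consider executing a block announced by bb with size n and seq = 0 that contains exactly one control-flow instruction. Then after the n instructions following the bb instruction are executed, PC equals the target written by that control-flow instruction, and no exception flag is raised (E = 0), provided IC = 0, B = 0, E = 0 held before the bb instruction. -/
/-- State of the BasicBlocker machine: instruction counter `IC`, target
register `T`, branch flag `B`, exception flag `E`, and program counter `PC`. -/
structure BBState where
  IC : ℕ
  T : ℕ
  B : ℕ
  E : ℕ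
  PC : ℕ

/-- Non-`bb` instructions: a control-flow instruction with its target, or a
plain (non-control-flow) instruction. -/
inductive BBInstr where
  | cf (target : ℕ)
  | plain

def BBInstr.isCF : BBInstr → Bool
  | .cf _ => true
  | .plain => false

/-- Executing the `bb` instruction with size `n` and sequential flag `seq`
(where `nextAddr` is the address of the `(n+1)`-th following instruction):
if `IC ≠ 0` then `IC ← 0` and `E ← 1`; otherwise `IC ← n`; if `seq = 0` then
`B ← 1`; if `seq = 1` then `B ← 0` and `T ← nextAddr`. -/
def execBB (n : ℕ) (seq : Bool) (nextAddr : ℕ) (s : BBState) : BBState :=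
  if s.IC ≠ 0 then { s with IC := 0, E := 1 }
  else if seq then { s with IC := n, B := 0, T := nextAddr }
  else { s with IC := n, B := 1 }

/-- Executing a non-`bb` instruction: first `IC` is decremented (if positive);
a control-flow instruction writes its target to `T` if `B > 0` (then
decrementing `B`), and sets `E ← 1` if `B = 0`; afterwards, if `IC = 0` then
`PC ← T`, and if moreover `B > 0` then `E ← 1`. -/
def execInstr (i : BBInstr) (s : BBState) : BBState :=
  let s1 : BBState := { s with IC := s.IC - 1 }
  let s2 : BBState :=
    match i with
    | .cf t => if s1.B > 0 then { s1 with T := t, B := s1.B - 1 }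
               else { s1 with E := 1 }
    | .plain => s1
  let s3 : BBState := if s2.IC = 0 then { s2 with PC := s2.T } else s2
  if s3.IC = 0 ∧ s3.B > 0 then { s3 with E := 1 } else s3

/-- Run a list of non-`bb` instructions. -/
def runInstrs (l : List BBInstr) (s : BBState) : BBState :=
  l.foldl (fun s i => execInstr i s) s


theorem bb_aux (t : ℕ) : ∀ (l : List BBInstr) (s : BBState),
    s.IC = l.length → s.E = 0 → s.B = l.countP (fun i => i.isCF) →
    l.countP (fun i => i.isCF) ≤ 1 →
    (l.countP (fun i => i.isCF) = 0 → s.T = t) →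
    (∀ i ∈ l, ∀ t', i = BBInstr.cf t' → t' = t) →
    l ≠ [] →
    (runInstrs l s).PC = t ∧ (runInstrs l s).E = 0 := by
  intro l
  induction l with
  | nil => intro s _ _ _ _ _ _ h; exact absurd rfl h
  | cons i rest ih =>
    intro s hIC hE hB hle hT htgt _
    have hstep : runInstrs (i :: rest) s = runInstrs rest (execInstr i s) := rfl
    rw [hstep]
    simp only [List.length_cons] at hIC
    by_cases hrest : rest = []
    · subst hrest
      simp only [List.countP_cons, List.countP_nil] at hB hT
      have hrun : runInstrs [] (execInstr i s) = execInstr i s := rfl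
      rw [hrun]
      cases i with
      | cf t' =>
        have ht' : t' = t := htgt _ (by simp) t' rfl
        simp [BBInstr.isCF] at hB
        simp [execInstr, hIC, hB, hE, ht']
      | plain =>
        simp [BBInstr.isCF] at hB hT
        simp [execInstr, hIC, hB, hE, hT]
    · have hlen : 0 < rest.length := List.length_pos_iff.mpr hrest
      have hne : rest.length ≠ 0 := by omega
      simp only [List.countP_cons] at hB hle hT
      cases i with
      | cf t' =>
        have ht' : t' = t := htgt _ (by simp) t' rfl
        have h1 : (if (fun i => BBInstr.isCF i) (BBInstr.cf t') = true then 1 else 0) = 1 := rfl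
        rw [h1] at hB hle hT
        have hc0 : rest.countP (fun i => i.isCF) = 0 := by omega
        have hB1 : s.B = 1 := by omega
        have hnext : execInstr (BBInstr.cf t') s =
            { s with IC := rest.length, T := t', B := 0 } := by
          simp [execInstr, hIC, hB1, hne]
        rw [hnext]
        exact ih _ rfl hE (by simp [hc0]) (by omega) (fun _ => ht')
          (fun j hj => htgt j (List.mem_cons_of_mem _ hj)) hrest
      | plain =>
        have h0 : (if (fun i => BBInstr.isCF i) BBInstr.plain = true then 1 else 0) = 0 := rfl
        rw [h0] at hB hle hT
        have hnext : execInstr BBInstr.plain s =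
            { s with IC := rest.length } := by
          simp [execInstr, hIC, hne]
        rw [hnext]
        exact ih _ rfl hE (by simp; omega) (by omega) (fun h => hT (by omega))
          (fun j hj => htgt j (List.mem_cons_of_mem _ hj)) hrest

/-- Executing a block announced by `bb` with size `n` and `seq = 0` that
contains exactly one control-flow instruction (with target `t`): after the `n`
instructions following the `bb` instruction are executed, `PC` equals the
target written by that control-flow instruction and no exception flag is
raised (`E = 0`), provided `IC = 0`, `B = 0`, `E = 0` held before the `bb`
instruction. -/
theorem bb_block_one_cf_sets_PC
    (n t nextAddr : ℕ) (l : List BBInstr) (s0 : BBState)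
    (hIC : s0.IC = 0) (hB : s0.B = 0) (hE : s0.E = 0)
    (hn : 0 < n) (hlen : l.length = n)
    -- exactly one control-flow instruction in the block
    (hone : l.countP (fun i => i.isCF) = 1)
    -- and its target is t
    (htgt : ∀ i ∈ l, ∀ t', i = BBInstr.cf t' → t' = t) :
    let sEnd := runInstrs l (execBB n false nextAddr s0)
    sEnd.PC = t ∧ sEnd.E = 0 := by
  intro sEnd
  have hbb : execBB n false nextAddr s0 = { s0 with IC := n, B := 1 } := by
    simp [execBB, hIC]
  have := bb_aux t l (execBB n false nextAddr s0)
    (by rw [hbb]; simp [hlen]) (by rw [hbb]; exact hE)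
    (by rw [hbb]; simp [hone]) (by omega) (by omega)
    htgt (by intro h; subst h; simp at hlen; omega)
  exact this
end

section
/- In the BasicBlocker semantics, executing a block announced by bb with size n and seq = 0 that contains no control-flow instruction results in the exception flag E being set (E ≠ 0) when IC reaches 0, assuming IC = 0, B = 0, E = 0 held before the bb instruction. -/
/-
With `IC = 0`, `bb n 0` sets `IC ← n` and `B ← 1`. A plain instruction only
decrements `IC` and never touches `B`, so after the `n`-th plain instruction `IC = 0` while still
`B = 1 > 0`, which raises `E`.
-/

theorem BBInstr.eq_plain_of_isCF_eq_false {i : BBInstr} (h : i.isCF = false) :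
    i = .plain := by
  cases i
  · contradiction
  · rfl

theorem execBB_false_of_IC_eq_zero {n nextAddr : ℕ} {s : BBState} (h : s.IC = 0) :
    execBB n false nextAddr s = { s with IC := n, B := 1 } := by
  simp [execBB, h]

theorem execInstr_plain_of_one_lt_IC {s : BBState} (h : 1 < s.IC) :
    execInstr .plain s = { s with IC := s.IC - 1 } := by
  have hIC : s.IC - 1 ≠ 0 := by omega
  simp [execInstr, hIC]

theorem execInstr_plain_E_eq_one {s : BBState} (hIC : s.IC = 1) (hB : 0 < s.B) :
    (execInstr .plain s).E = 1 := by
  simp [execInstr, hIC, hB]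

theorem runInstrs_cons (i : BBInstr) (l : List BBInstr) (s : BBState) :
    runInstrs (i :: l) s = runInstrs l (execInstr i s) :=
  rfl

theorem runInstrs_plain_E_eq_one {l : List BBInstr} (hl : l ≠ [])
    (hplain : ∀ i ∈ l, i.isCF = false) (s : BBState) (hIC : s.IC = l.length) (hB : 0 < s.B) :
    (runInstrs l s).E = 1 := by
  induction l generalizing s with
  | nil => contradiction
  | cons i rest ih =>
    rw [BBInstr.eq_plain_of_isCF_eq_false (hplain i List.mem_cons_self), runInstrs_cons]
    rw [List.length_cons] at hIC
    rcases eq_or_ne rest [] with rfl | hrest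
    · exact execInstr_plain_E_eq_one hIC hB
    · have hlen : 0 < rest.length := List.length_pos_iff.mpr hrest
      rw [execInstr_plain_of_one_lt_IC (by omega)]
      exact ih hrest (fun j hj => hplain j (List.mem_cons_of_mem i hj)) _ (by simp [hIC]) hB

theorem bb_block_no_cf_raises_general
    (n nextAddr : ℕ) (l : List BBInstr) (s0 : BBState)
    (hIC : s0.IC = 0)
    (hn : 0 < n) (hlen : l.length = n)
    -- no control-flow instruction in the block
    (hnone : ∀ i ∈ l, i.isCF = false) :
    (runInstrs l (execBB n false nextAddr s0)).E ≠ 0 := by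
  have hl : l ≠ [] := List.ne_nil_of_length_pos (hlen ▸ hn)
  have hE := runInstrs_plain_E_eq_one hl hnone (execBB n false nextAddr s0)
    (by rw [execBB_false_of_IC_eq_zero hIC, hlen]) (by rw [execBB_false_of_IC_eq_zero hIC]; simp)
  omega

/-- Executing a block announced by `bb` with size `n > 0` and `seq = 0` that
contains no control-flow instruction results in the exception flag being set
(`E ≠ 0`) when `IC` reaches `0`, assuming `IC = 0`, `B = 0`, `E = 0` held
before the `bb` instruction. -/
theorem bb_block_no_cf_raises
    (n nextAddr : ℕ) (l : List BBInstr) (s0 : BBState)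
    (hIC : s0.IC = 0) (hB : s0.B = 0) (hE : s0.E = 0)
    (hn : 0 < n) (hlen : l.length = n)
    -- no control-flow instruction in the block
    (hnone : ∀ i ∈ l, i.isCF = false) :
    (runInstrs l (execBB n false nextAddr s0)).E ≠ 0 :=
  bb_block_no_cf_raises_general n nextAddr l s0 hIC hn hlen hnone
end

section
/- Delayed branching preserves functional control flow: for a straight-line block of n instructions in which exactly one instruction computes a branch target t, the final PC after executing the block under BasicBlocker delayed-branch semantics (write target to T, apply PC ← T after the n-th instruction) equals the PC that would result from placing the branch as the last instruction of the block under immediate-branch semantics, provided the other n−1 instructions do not write PC or T and their effects commute with the position of the branch computation. -/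
/-- Machine state: registers, memory, the program counter `pc` and the
BasicBlocker target register `t`. -/
structure MState where
  regs : ℕ → ℕ
  mem : ℕ → ℕ
  pc : ℕ
  t : ℕ

/-- A non-branch instruction neither reads nor writes `PC` or `T`: it
preserves `pc` and `t`, and its effect on registers and memory depends only
on registers and memory. -/
def NonBranch (f : MState → MState) : Prop :=
  (∀ s, (f s).pc = s.pc ∧ (f s).t = s.t) ∧
  (∀ s s', s.regs = s'.regs → s.mem = s'.mem →
    (f s).regs = (f s').regs ∧ (f s).mem = (f s').mem)

/-- The delayed-branch semantics of the branch: write the target to `T`. -/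
def branchDelayed (tgt : ℕ) (s : MState) : MState := { s with t := tgt }

/-- The immediate-branch semantics of the branch: write the target to `PC`. -/
def branchImmediate (tgt : ℕ) (s : MState) : MState := { s with pc := tgt }

/-- Apply `PC ← T` (performed at the end of a BasicBlocker block). -/
def applyPCfromT (s : MState) : MState := { s with pc := s.t }

def runList (l : List (MState → MState)) (s : MState) : MState :=
  l.foldl (fun s f => f s) s

theorem NonBranch.t_apply {f : MState → MState} (hf : NonBranch f) (s : MState) :
    (f s).t = s.t :=
  (hf.1 s).2

theorem runList_append (l₁ l₂ : List (MState → MState)) (s : MState) :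
    runList (l₁ ++ l₂) s = runList l₂ (runList l₁ s) :=
  List.foldl_append

theorem runList_singleton (f : MState → MState) (s : MState) : runList [f] s = f s :=
  rfl

theorem runList_t {fs : List (MState → MState)} (hfs : ∀ f ∈ fs, ∀ s, (f s).t = s.t)
    (s : MState) : (runList fs s).t = s.t := by
  induction fs generalizing s with
  | nil => rfl
  | cons f fs ih =>
    rw [← List.singleton_append, runList_append, ih (fun g hg => hfs g (List.mem_cons_of_mem f hg)),
      runList_singleton, hfs f List.mem_cons_self]

theorem delayed_branch_preserves_control_flow_general
    (tgt : ℕ)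
    (fs : List (MState → MState))       -- the n − 1 non-branch instructions
    (hnb : ∀ f ∈ fs, NonBranch f)
    (k : ℕ)        -- position of the branch (delayed)
    (s0 : MState) :
    (applyPCfromT
        (runList (fs.take k ++ [branchDelayed tgt] ++ fs.drop k) s0)).pc =
      (branchImmediate tgt (runList fs s0)).pc := by
  have hdrop : ∀ f ∈ fs.drop k, ∀ s, (f s).t = s.t :=
    fun f hf => (hnb f (List.mem_of_mem_drop hf)).t_apply
  simp only [applyPCfromT, branchImmediate, runList_append, runList_singleton, runList_t hdrop,
    branchDelayed]

/-- Delayed branching preserves functional control flow: for a straight-line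
block of `n` instructions in which exactly one instruction computes a branch
target `tgt` (the same value regardless of its position in the block), the
final `PC` after executing the block under BasicBlocker delayed-branch
semantics — with the branch scheduled at any position `k`, writing `tgt` to
`T`, and `PC ← T` applied after the `n`-th instruction — equals the `PC`
resulting from placing the branch as the last instruction of the block under
immediate-branch semantics, provided the other `n − 1` instructions do not
read or write `PC` or `T`. -/
theorem delayed_branch_preserves_control_flow
    (n : ℕ) (tgt : ℕ)
    (fs : List (MState → MState))       -- the n − 1 non-branch instructions
    (hlen : fs.length = n - 1) (hn : 0 < n)
    (hnb : ∀ f ∈ fs, NonBranch f)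
    (k : ℕ) (hk : k ≤ fs.length)        -- position of the branch (delayed)
    (s0 : MState) :
    (applyPCfromT
        (runList (fs.take k ++ [branchDelayed tgt] ++ fs.drop k) s0)).pc =
      (branchImmediate tgt (runList fs s0)).pc :=
  delayed_branch_preserves_control_flow_general tgt fs hnb k s0
end

section
/- Hardware loop counter correctness: for a single-block loop whose bb instruction carries both start and end flags for loop-counter set 1, if lcnt initializes the counter to m ≥ 1, then the block body of n instructions is executed exactly m times, and the final control transfer exits to the instruction following the block. -/
/-- Loop-counter machine over states `(pc, c)`, for a single-block loop whose
`bb` instruction (at address `bbAddr`) carries both the start and end flag for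
loop-counter set 1, with a body of `n` instructions at addresses
`bbAddr + 1, …, bbAddr + n`:
* executing the `bb` instruction (start flag) records `bbAddr` as loop start
  and decrements the counter `c`;
* at the block's end (end flag, address `bbAddr + n`), if `c ≠ 0` then `PC` is
  set back to the loop start `bbAddr`, otherwise the block behaves as a
  sequential block and `PC` is set to the fall-through address
  `bbAddr + n + 1`;
* all other instructions just advance `PC`. -/
def loopStep (bbAddr n : ℕ) (s : ℕ × ℕ) : ℕ × ℕ :=
  if s.1 = bbAddr then (bbAddr + 1, s.2 - 1)
  else if s.1 = bbAddr + n then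
    (if s.2 ≠ 0 then bbAddr else bbAddr + n + 1, s.2)
  else (s.1 + 1, s.2)

/-! One pass through the loop, the `bb` instruction followed by the `n` body instructions, takes
`n + 1` steps, is at `bbAddr` only at its first step, and maps `(bbAddr, c + 1)` back to
`(bbAddr, c)` if `c ≠ 0` and to the fall-through state `(bbAddr + n + 1, 0)` if `c = 0`.
Induction on `m` over consecutive passes gives both the exit state and the number of visits. -/

open Finset Function

theorem card_filter_range_add_iterate {α : Type*} (f : α → α) (P : α → Prop) [DecidablePred P]
    (x : α) (p N : ℕ) :
    ((range (p + N)).filter (fun j => P (f^[j] x))).card =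
      ((range p).filter (fun j => P (f^[j] x))).card +
        ((range N).filter (fun j => P (f^[j] (f^[p] x)))).card := by
  simp only [card_filter, sum_range_add]
  simp only [add_comm p, iterate_add_apply]

section loopStep

variable {bbAddr n : ℕ}

theorem loopStep_start (c : ℕ) : loopStep bbAddr n (bbAddr, c) = (bbAddr + 1, c - 1) := by
  simp [loopStep]

theorem loopStep_body {p : ℕ} (c : ℕ) (hp : bbAddr < p) (hpn : p < bbAddr + n) :
    loopStep bbAddr n (p, c) = (p + 1, c) := by
  simp [loopStep, hp.ne', hpn.ne]

theorem loopStep_end (hn : 0 < n) (c : ℕ) :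
    loopStep bbAddr n (bbAddr + n, c) = (if c ≠ 0 then bbAddr else bbAddr + n + 1, c) := by
  simp [loopStep, hn.ne']

theorem loopStep_iterate_of_le {k : ℕ} (c : ℕ) (hk : 0 < k) (hkn : k ≤ n) :
    (loopStep bbAddr n)^[k] (bbAddr, c) = (bbAddr + k, c - 1) := by
  induction k, hk using Nat.le_induction with
  | base => exact loopStep_start c
  | succ k hk ih =>
    rw [iterate_succ_apply', ih (by omega), loopStep_body _ (by omega) (by omega), add_assoc]

theorem loopStep_iterate_pass (hn : 0 < n) (c : ℕ) :
    (loopStep bbAddr n)^[n + 1] (bbAddr, c + 1) =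
      (if c = 0 then bbAddr + n + 1 else bbAddr, c) := by
  rw [iterate_succ_apply', loopStep_iterate_of_le _ hn le_rfl, loopStep_end hn]
  by_cases hc : c = 0 <;> simp [hc]

theorem card_filter_range_iterate_pass (c : ℕ) :
    ((range (n + 1)).filter
        (fun j => ((loopStep bbAddr n)^[j] (bbAddr, c)).1 = bbAddr)).card = 1 := by
  rw [card_eq_one]
  refine ⟨0, ?_⟩
  ext j
  simp only [mem_filter, mem_range, mem_singleton]
  constructor
  · rintro ⟨hj, hpc⟩
    by_contra hj0
    rw [loopStep_iterate_of_le c (Nat.pos_of_ne_zero hj0) (by omega)] at hpc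
    omega
  · rintro rfl
    simp

theorem loopStep_iterate_loop (hn : 0 < n) (m : ℕ) :
    (loopStep bbAddr n)^[(m + 1) * (n + 1)] (bbAddr, m + 1) = (bbAddr + n + 1, 0) := by
  induction m with
  | zero => rw [zero_add, one_mul, loopStep_iterate_pass hn, if_pos rfl]
  | succ m ih =>
    rw [show (m + 2) * (n + 1) = (m + 1) * (n + 1) + (n + 1) by ring, iterate_add_apply,
      loopStep_iterate_pass hn, if_neg m.succ_ne_zero, ih]

theorem card_filter_range_iterate_loop (hn : 0 < n) (m : ℕ) :
    ((range ((m + 1) * (n + 1))).filter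
        (fun j => ((loopStep bbAddr n)^[j] (bbAddr, m + 1)).1 = bbAddr)).card = m + 1 := by
  induction m with
  | zero => simpa using card_filter_range_iterate_pass (bbAddr := bbAddr) (n := n) 1
  | succ m ih =>
    rw [show (m + 2) * (n + 1) = (n + 1) + (m + 1) * (n + 1) by ring,
      card_filter_range_add_iterate _ (fun s : ℕ × ℕ => s.1 = bbAddr),
      card_filter_range_iterate_pass, loopStep_iterate_pass hn, if_neg m.succ_ne_zero, ih,
      add_comm]

end loopStep

/-- Hardware loop counter correctness: for a single-block loop with body of
`n ≥ 1` instructions, if `lcnt` initialized the counter to `m ≥ 1`, then the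
block body is executed exactly `m` times (the loop's `bb` instruction is
executed `m` times), and the final control transfer exits to the instruction
following the block (`bbAddr + n + 1`) with counter `0`. -/
theorem hardware_loop_counter_correct
    (bbAddr n m : ℕ) (hn : 1 ≤ n) (hm : 1 ≤ m) :
    (loopStep bbAddr n)^[m * (n + 1)] (bbAddr, m) = (bbAddr + n + 1, 0) ∧
    ((Finset.range (m * (n + 1))).filter
        (fun j => ((loopStep bbAddr n)^[j] (bbAddr, m)).1 = bbAddr)).card
      = m := by
  obtain ⟨m, rfl⟩ := Nat.exists_eq_add_of_le' hm
  exact ⟨loopStep_iterate_loop hn m, card_filter_range_iterate_loop hn m⟩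
end
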